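/- arXiv:2307.14722 — 3 statements merged into one kernel-verified Lean document; each statement's English description precedes it below -/
import Mathlib

section
/- Let e be a rational number with e ≥ 1, and define a sequence a : ℕ → ℚ by a(0) = e - 1 and a(j+1) = a(j) - 1 if a(j) ≥ 1, and a(j+1) = a(j) + e - 1 otherwise. Then there exists an index j₀ with a(j₀) = 0. -/
theorem stmt_1 (e : ℚ) (he : 1 ≤ e) (a : ℕ → ℚ)
    (h0 : a 0 = e - 1)
    (hrec : ∀ j, a (j + 1) = if 1 ≤ a j then a j - 1 else a j + e - 1) :
    ∃ j₀, a j₀ = 0 := by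
  -- bounds: 0 ≤ a j < e
  have hbd : ∀ j, 0 ≤ a j ∧ a j < e := by
    intro j
    induction j with
    | zero => rw [h0]; constructor <;> linarith
    | succ n ih =>
      rw [hrec n]
      obtain ⟨h1, h2⟩ := ih
      by_cases hc : 1 ≤ a n
      · rw [if_pos hc]; constructor <;> linarith
      · rw [if_neg hc]; push_neg at hc; constructor <;> linarith
  -- integrality: den * a j is an integer
  have hden : (0 : ℚ) < (e.den : ℚ) := by positivity
  have hint : ∀ j, ∃ k : ℤ, (e.den : ℚ) * a j = (k : ℚ) := by
    intro j
    have hde : (e.den : ℚ) * e = (e.num : ℚ) := by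
      rw [mul_comm]
      exact_mod_cast Rat.mul_den_eq_num e
    induction j with
    | zero =>
      refine ⟨e.num - e.den, ?_⟩
      rw [h0]; push_cast; linarith
    | succ n ih =>
      obtain ⟨k, hk⟩ := ih
      rw [hrec n]
      by_cases hc : 1 ≤ a n
      · refine ⟨k - e.den, ?_⟩
        rw [if_pos hc]; push_cast; linarith
      · refine ⟨k + e.num - e.den, ?_⟩
        rw [if_neg hc]; push_cast; linarith
  -- package into a Fin-valued function
  have hfin : ∃ m n : ℕ, m ≠ n ∧ a m = a n := by
    set N : ℕ := e.num.toNat with hN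
    have hNpos : 0 < N := by
      have : 0 < e.num := by
        rw [Rat.num_pos]; linarith
      omega
    have hbound : ∀ j, ((e.den : ℚ) * a j).num.toNat < N := by
      intro j
      obtain ⟨k, hk⟩ := hint j
      obtain ⟨h1, h2⟩ := hbd j
      have hklt : (k : ℚ) < (e.num : ℚ) := by
        have hde : (e.den : ℚ) * e = (e.num : ℚ) := by
          rw [mul_comm]; exact_mod_cast Rat.mul_den_eq_num e
        rw [← hk, ← hde]
        exact (mul_lt_mul_iff_right₀ hden).mpr h2
      have hk0 : (0 : ℚ) ≤ (k : ℚ) := by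
        rw [← hk]; positivity
      rw [hk]
      simp only [Rat.num_intCast]
      have h1' : k < e.num := by exact_mod_cast hklt
      have h2' : 0 ≤ k := by exact_mod_cast hk0
      omega
    set g : ℕ → Fin N := fun j =>
      ⟨((e.den : ℚ) * a j).num.toNat % N, Nat.mod_lt _ hNpos⟩ with hg
    obtain ⟨m, n, hmn, heq⟩ := Finite.exists_ne_map_eq_of_infinite g
    refine ⟨m, n, hmn, ?_⟩
    obtain ⟨km, hkm⟩ := hint m
    obtain ⟨kn, hkn⟩ := hint n
    have hkm0 : 0 ≤ km := by
      have : (0:ℚ) ≤ (km:ℚ) := by rw [← hkm]; have := (hbd m).1; positivity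
      exact_mod_cast this
    have hkn0 : 0 ≤ kn := by
      have : (0:ℚ) ≤ (kn:ℚ) := by rw [← hkn]; have := (hbd n).1; positivity
      exact_mod_cast this
    have : km = kn := by
      have hbm := hbound m
      have hbn := hbound n
      have hm : (g m : ℕ) = ((e.den : ℚ) * a m).num.toNat := by
        simp only [hg]; exact Nat.mod_eq_of_lt hbm
      have hn : (g n : ℕ) = ((e.den : ℚ) * a n).num.toNat := by
        simp only [hg]; exact Nat.mod_eq_of_lt hbn
      have hgeq : (g m : ℕ) = (g n : ℕ) := by rw [heq]
      rw [hm, hn, hkm, hkn] at hgeq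
      simp only [Rat.num_intCast] at hgeq
      have hkm0' : 0 ≤ km := hkm0
      omega
    have : (e.den : ℚ) * a m = (e.den : ℚ) * a n := by
      rw [hkm, hkn, this]
    exact mul_left_cancel₀ (ne_of_gt hden) this
  -- step map is injective
  have hinj : ∀ m n, a (m + 1) = a (n + 1) → a m = a n := by
    intro m n h
    rw [hrec m, hrec n] at h
    obtain ⟨hm0, hme⟩ := hbd m
    obtain ⟨hn0, hne⟩ := hbd n
    by_cases hm : 1 ≤ a m <;> by_cases hn : 1 ≤ a n
    · rw [if_pos hm, if_pos hn] at h; linarith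
    · rw [if_pos hm, if_neg hn] at h; push_neg at hn; linarith
    · rw [if_neg hm, if_pos hn] at h; push_neg at hm; linarith
    · rw [if_neg hm, if_neg hn] at h; linarith
  -- cancel down to a 0 = a k
  have hcancel : ∀ m k, a m = a (m + k) → a 0 = a k := by
    intro m
    induction m with
    | zero => intro k h; simpa using h
    | succ n ih =>
      intro k h
      apply ih
      apply hinj
      have : n + 1 + k = n + k + 1 := by ring
      rw [← this]; exact h
  obtain ⟨m, n, hmn, heq⟩ := hfin
  rcases Nat.lt_or_ge m n with hlt | hge
  · obtain ⟨k, hk, rfl⟩ : ∃ k, 0 < k ∧ n = m + k := ⟨n - m, by omega, by omega⟩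
    have h0k : a 0 = a (m + k - m) := by
      have : m + k - m = k := by omega
      rw [this]; exact hcancel m k heq
    have hk' : a k = e - 1 := by
      have : m + k - m = k := by omega
      rw [this] at h0k; rw [← h0k, h0]
    obtain ⟨q, rfl⟩ : ∃ q, k = q + 1 := ⟨k - 1, by omega⟩
    have := hrec q
    rw [hk'] at this
    obtain ⟨hq0, hqe⟩ := hbd q
    by_cases hc : 1 ≤ a q
    · rw [if_pos hc] at this
      exfalso; linarith
    · rw [if_neg hc] at this
      exact ⟨q, by linarith⟩
  · have hlt : n < m := by omega
    obtain ⟨k, hk, rfl⟩ : ∃ k, 0 < k ∧ m = n + k := ⟨m - n, by omega, by omega⟩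
    have h0k : a 0 = a k := hcancel n k heq.symm
    have hk' : a k = e - 1 := by rw [← h0k, h0]
    obtain ⟨q, rfl⟩ : ∃ q, k = q + 1 := ⟨k - 1, by omega⟩
    have := hrec q
    rw [hk'] at this
    obtain ⟨hq0, hqe⟩ := hbd q
    by_cases hc : 1 ≤ a q
    · rw [if_pos hc] at this
      exfalso; linarith
    · rw [if_neg hc] at this
      exact ⟨q, by linarith⟩
end

section
/- Let eα, eβ be rational numbers with eα ≥ 1 and eβ ≥ 1, and define the sequences aα, aβ : ℕ → ℚ by a(0) = e - 1 and a(j+1) = a(j) - 1 if a(j) ≥ 1, else a(j+1) = a(j) + e - 1 (with the respective e). If for every j one has aα(j) ≥ 1 if and only if aβ(j) ≥ 1, then eα = eβ. -/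
theorem stmt_3_aux (eα eβ : ℚ) (hα : 1 ≤ eα) (hβ : 1 ≤ eβ) (aα aβ : ℕ → ℚ)
    (h0α : aα 0 = eα - 1)
    (h0β : aβ 0 = eβ - 1)
    (hrecα : ∀ j, aα (j + 1) = if 1 ≤ aα j then aα j - 1 else aα j + eα - 1)
    (hrecβ : ∀ j, aβ (j + 1) = if 1 ≤ aβ j then aβ j - 1 else aβ j + eβ - 1)
    (hsame : ∀ j, 1 ≤ aα j ↔ 1 ≤ aβ j) :
    eα ≤ eβ := by
  by_contra h
  push_neg at h
  have hδ : 0 < eα - eβ := by linarith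
  have hboundα : ∀ n, 0 ≤ aα n ∧ aα n < eα := by
    intro n
    induction n with
    | zero => rw [h0α]; constructor <;> linarith
    | succ n ih =>
      rw [hrecα n]
      split_ifs with hc
      · constructor <;> linarith [ih.2]
      · push_neg at hc; constructor <;> linarith [ih.1]
  have hboundβ : ∀ n, 0 ≤ aβ n ∧ aβ n < eβ := by
    intro n
    induction n with
    | zero => rw [h0β]; constructor <;> linarith
    | succ n ih =>
      rw [hrecβ n]
      split_ifs with hc
      · constructor <;> linarith [ih.2]
      · push_neg at hc; constructor <;> linarith [ih.1]
  have key : ∀ n, ∃ c : ℕ, aα n = c * eα - (n + 1) ∧ aβ n = c * eβ - (n + 1) := by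
    intro n
    induction n with
    | zero => exact ⟨1, by push_cast; rw [h0α]; ring, by push_cast; rw [h0β]; ring⟩
    | succ n ih =>
      obtain ⟨c, hc1, hc2⟩ := ih
      by_cases hge : 1 ≤ aα n
      · refine ⟨c, ?_, ?_⟩
        · rw [hrecα n, if_pos hge, hc1]; push_cast; ring
        · rw [hrecβ n, if_pos ((hsame n).1 hge), hc2]; push_cast; ring
      · refine ⟨c + 1, ?_, ?_⟩
        · rw [hrecα n, if_neg hge, hc1]; push_cast; ring
        · rw [hrecβ n, if_neg (fun hb => hge ((hsame n).2 hb)), hc2]; push_cast; ring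
  obtain ⟨n, hn⟩ := exists_nat_ge (eα * eβ / (eα - eβ))
  rw [div_le_iff₀ hδ] at hn
  obtain ⟨c, hc1, hc2⟩ := key n
  have h1 := (hboundα n).2
  have h2 := (hboundβ n).1
  rw [hc1] at h1
  rw [hc2] at h2
  have hcpos : (0:ℚ) ≤ (c:ℚ) := Nat.cast_nonneg c
  have heβ : (0:ℚ) < eβ := by linarith
  -- c * eβ ≥ n + 1 > eα * eβ / (eα - eβ) hence c * (eα - eβ) > eα,
  -- but c * eα - (n+1) < eα and c * eβ - (n+1) ≥ 0 give c * (eα - eβ) < eα.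
  nlinarith [mul_pos hδ heβ, mul_nonneg hcpos (le_of_lt hδ)]

theorem stmt_3 (eα eβ : ℚ) (hα : 1 ≤ eα) (hβ : 1 ≤ eβ) (aα aβ : ℕ → ℚ)
    (h0α : aα 0 = eα - 1)
    (h0β : aβ 0 = eβ - 1)
    (hrecα : ∀ j, aα (j + 1) = if 1 ≤ aα j then aα j - 1 else aα j + eα - 1)
    (hrecβ : ∀ j, aβ (j + 1) = if 1 ≤ aβ j then aβ j - 1 else aβ j + eβ - 1)
    (hsame : ∀ j, 1 ≤ aα j ↔ 1 ≤ aβ j) :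
    eα = eβ :=
  le_antisymm
    (stmt_3_aux eα eβ hα hβ aα aβ h0α h0β hrecα hrecβ hsame)
    (stmt_3_aux eβ eα hβ hα aβ aα h0β h0α hrecβ hrecα (fun j => (hsame j).symm))
end

section
/- Let K be a field with a valuation v (with values in ℤ ∪ {∞}) such that v(d) = 0 for the integer d ≥ 2, and let f(y) = y^d + Σ_{i=1}^d c_i y^{d-i} with v(c_i) ≥ i for all i. Write f(z - c₁/d) = z^d + Σ_{i=1}^d g_i z^{d-i}. Then v(g_i) ≥ i for all i (and g₁ = 0). -/
/-!
Give `X` weight `1` and a scalar `b` weight `v b`. The polynomials of weighted order at least `w`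
form a graded filtration of `K[X]`, so `f`, a sum of products of weighted order `d`, lies in
filtration degree `d`. Since `v d = 0`, the shift `X - C (c₁ / d)` has weighted order `1`, and
substituting a polynomial of weighted order `1` preserves weighted order; reading off the
coefficient of `z ^ (d - i)` gives `v (g i) ≥ i`. Finally `g₁ = c₁ - d · (c₁ / d) = 0`.
-/

open Polynomial

namespace Polynomial

variable {R : Type*} [CommRing R] (v : AddValuation R (WithTop ℤ))

def weightedFiltration (w : ℤ) : AddSubgroup R[X] where
  carrier := {f | ∀ m : ℕ, ((w - m : ℤ) : WithTop ℤ) ≤ v (f.coeff m)}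
  zero_mem' m := by simp
  add_mem' hf hg m := by
    rw [coeff_add]
    exact v.map_le_add (hf m) (hg m)
  neg_mem' hf m := by
    rw [coeff_neg, v.map_neg]
    exact hf m

variable {v}

theorem C_mem_weightedFiltration {w : ℤ} {b : R} (hb : (w : WithTop ℤ) ≤ v b) :
    C b ∈ weightedFiltration v w := by
  intro m
  rcases eq_or_ne m 0 with rfl | hm
  · simpa using hb
  · simp [coeff_C, hm]

theorem X_mem_weightedFiltration : (X : R[X]) ∈ weightedFiltration v 1 := by
  intro m
  rcases eq_or_ne m 1 with rfl | hm
  · simp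
  · simp [coeff_X, Ne.symm hm]

instance : SetLike.GradedMonoid (weightedFiltration v) where
  one_mem := by simpa using C_mem_weightedFiltration (v := v) (w := 0) (b := 1) (by simp)
  mul_mem := by
    intro w w' f g hf hg m
    rw [coeff_mul]
    refine v.map_le_sum fun p hp => ?_
    rw [Finset.HasAntidiagonal.mem_antidiagonal] at hp
    rw [v.map_mul]
    calc (((w + w' : ℤ) - m : ℤ) : WithTop ℤ)
        = ((w - p.1 : ℤ) : WithTop ℤ) + ((w' - p.2 : ℤ)) := by
          rw [← WithTop.coe_add, ← hp]
          congr 1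
          push_cast
          ring
      _ ≤ v (f.coeff p.1) + v (g.coeff p.2) := add_le_add (hf p.1) (hg p.2)

theorem comp_mem_weightedFiltration {w : ℤ} {f q : R[X]} (hf : f ∈ weightedFiltration v w)
    (hq : q ∈ weightedFiltration v 1) : f.comp q ∈ weightedFiltration v w := by
  rw [comp_eq_sum_left]
  refine AddSubgroup.sum_mem _ fun e _ => ?_
  simpa using SetLike.mul_mem_graded (C_mem_weightedFiltration (hf e)) (SetLike.pow_mem_graded e hq)

theorem X_pow_add_sum_C_mul_X_pow_mem_weightedFiltration {d : ℕ} {c : ℕ → R}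
    (hc : ∀ i, 1 ≤ i → i ≤ d → ((i : ℤ) : WithTop ℤ) ≤ v (c i)) :
    X ^ d + ∑ i ∈ Finset.Icc 1 d, C (c i) * X ^ (d - i) ∈ weightedFiltration v d := by
  refine add_mem (by simpa using SetLike.pow_mem_graded d X_mem_weightedFiltration)
    (sum_mem fun i hi => ?_)
  rw [Finset.mem_Icc] at hi
  convert SetLike.mul_mem_graded (C_mem_weightedFiltration (hc i hi.1 hi.2))
    (SetLike.pow_mem_graded (d - i) (X_mem_weightedFiltration (v := v))) using 2
  rw [nsmul_one]
  omega

theorem coeff_X_sub_C_pow (a : R) (n k : ℕ) :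
    ((X - C a) ^ n).coeff k = (-a) ^ (n - k) * (n.choose k : R) := by
  rw [sub_eq_add_neg, ← C_neg, coeff_X_add_C_pow]

theorem coeff_pred_comp_X_sub_C (c : ℕ → R) (a : R) {d : ℕ} (hd : d ≠ 0) :
    ((X ^ d + ∑ i ∈ Finset.Icc 1 d, C (c i) * X ^ (d - i)).comp (X - C a)).coeff (d - 1) =
      c 1 - d * a := by
  simp only [add_comp, sum_comp, mul_comp, pow_comp, X_comp, C_comp, coeff_add,
    finsetSum_coeff, coeff_C_mul, coeff_X_sub_C_pow]
  rw [Finset.sum_eq_single_of_mem 1 (by simp; omega)]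
  · rw [Nat.sub_sub_self (by omega), Nat.choose_symm (by omega), Nat.choose_one_right]
    simp only [Nat.sub_self, pow_zero, pow_one, Nat.choose_self, Nat.cast_one, mul_one]
    ring
  · intro i hi hi1
    rw [Finset.mem_Icc] at hi
    rw [Nat.choose_eq_zero_of_lt (by omega)]
    simp

end Polynomial

theorem stmt_13_general (K : Type*) [Field K] (v : AddValuation K (WithTop ℤ))
    (d : ℕ) (hvd : v ((d : K)) = 0)
    (c : ℕ → K) (hc : ∀ i, 1 ≤ i → i ≤ d → ((i : ℤ) : WithTop ℤ) ≤ v (c i))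
    (f : K[X]) (hf : f = X ^ d + ∑ i ∈ Finset.Icc 1 d, C (c i) * X ^ (d - i))
    (g : ℕ → K) (hg : ∀ i, g i = (f.comp (X - C (c 1 / d))).coeff (d - i)) :
    (∀ i, 1 ≤ i → i ≤ d → ((i : ℤ) : WithTop ℤ) ≤ v (g i)) ∧ g 1 = 0 := by
  have hdK : (d : K) ≠ 0 := by
    intro h
    simp [h] at hvd
  have hd : d ≠ 0 := by
    rintro rfl
    exact hdK Nat.cast_zero
  have hshift : X - C (c 1 / d) ∈ weightedFiltration v 1 := by
    refine sub_mem X_mem_weightedFiltration (C_mem_weightedFiltration ?_)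
    rw [v.map_div, hvd, sub_zero]
    exact hc 1 le_rfl (by omega)
  refine ⟨fun i hi1 hid => ?_, ?_⟩
  · have := comp_mem_weightedFiltration
      (hf ▸ X_pow_add_sum_C_mul_X_pow_mem_weightedFiltration hc) hshift (d - i)
    rwa [← hg, Nat.cast_sub hid, sub_sub_cancel] at this
  · rw [hg, hf, coeff_pred_comp_X_sub_C c _ hd, mul_div_cancel₀ _ hdK, sub_self]

/-- The Tschirnhaus change of variable preserves the normal form: if
`f = y^d + ∑ c_i y^{d-i}` with `v(c_i) ≥ i`, then the coefficients `g_i` of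
`f(z - c₁/d) = z^d + ∑ g_i z^{d-i}` also satisfy `v(g_i) ≥ i`, and `g₁ = 0`. -/
theorem stmt_13 (K : Type*) [Field K] (v : AddValuation K (WithTop ℤ))
    (d : ℕ) (hd : 2 ≤ d) (hvd : v ((d : K)) = 0)
    (c : ℕ → K) (hc : ∀ i, 1 ≤ i → i ≤ d → ((i : ℤ) : WithTop ℤ) ≤ v (c i))
    (f : K[X]) (hf : f = X ^ d + ∑ i ∈ Finset.Icc 1 d, C (c i) * X ^ (d - i))
    (g : ℕ → K) (hg : ∀ i, g i = (f.comp (X - C (c 1 / d))).coeff (d - i)) :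
    (∀ i, 1 ≤ i → i ≤ d → ((i : ℤ) : WithTop ℤ) ≤ v (g i)) ∧ g 1 = 0 :=
  stmt_13_general K v d hvd c hc f hf g hg
end
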